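/- Let τ, h₁, h₂ > 0, let N₁, N₂ be positive integers, let d : ℤ × ℤ → ℝ be an (N₁,N₂)-periodic grid function, and define the linear operator 𝔸 on (N₁,N₂)-periodic grid functions by (𝔸U)(j₁,j₂) = U(j₁,j₂) − (τ²/4)·( (δ_x²U)(j₁,j₂) + (δ_y²U)(j₁,j₂) ) + (τ²/8)·d(j₁,j₂)²·U(j₁,j₂). Then for every (N₁,N₂)-periodic grid function U one has ⟨𝔸U, U⟩ₕ ≥ ‖U‖ₕ²; in particular, if 𝔸U = 0 then U = 0. -/
import Mathlib

open Finset


lemma shift_sum (N : ℕ) (F : ℕ → ℝ) (h : F N = F 0) :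
    ∑ j ∈ Finset.range N, F (j + 1) = ∑ j ∈ Finset.range N, F j := by
  have h1 := Finset.sum_range_succ' F N
  have h2 := Finset.sum_range_succ F N
  linarith [h1, h2]

lemma row_identity (N : ℕ) (w : ℤ → ℝ) (hw : ∀ j : ℤ, w (j + N) = w j) :
    ∑ j ∈ Finset.range N, (w ((j:ℤ) + 1) - 2 * w (j:ℤ) + w ((j:ℤ) - 1)) * w (j:ℤ)
      = -∑ j ∈ Finset.range N, (w ((j:ℤ) + 1) - w (j:ℤ))^2 := by
  set G : ℕ → ℝ := fun j => (w (j:ℤ) - w ((j:ℤ) - 1)) * w (j:ℤ) with hG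
  have hGN : G N = G 0 := by
    simp only [hG]
    have e1 : w (N:ℤ) = w 0 := by have := hw 0; simpa using this
    have e2 : w ((N:ℤ) - 1) = w ((0:ℤ) - 1) := by
      have := hw (-1); rw [show ((N:ℤ) - 1) = -1 + N by ring, this]; ring_nf
    rw [e1, e2]
    norm_num
  have hshift := shift_sum N G hGN
  have hG1 : ∀ j : ℕ, G (j + 1) = (w ((j:ℤ) + 1) - w (j:ℤ)) * w ((j:ℤ) + 1) := by
    intro j
    simp only [hG]
    push_cast
    ring_nf
  calc ∑ j ∈ Finset.range N, (w ((j:ℤ) + 1) - 2 * w (j:ℤ) + w ((j:ℤ) - 1)) * w (j:ℤ)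
      = ∑ j ∈ Finset.range N, ((w ((j:ℤ) + 1) - w (j:ℤ)) * w (j:ℤ) - G j) := by
        apply Finset.sum_congr rfl; intro j _; simp only [hG]; ring
    _ = ∑ j ∈ Finset.range N, (w ((j:ℤ) + 1) - w (j:ℤ)) * w (j:ℤ)
        - ∑ j ∈ Finset.range N, G (j+1) := by rw [Finset.sum_sub_distrib, hshift]
    _ = ∑ j ∈ Finset.range N, ((w ((j:ℤ) + 1) - w (j:ℤ)) * w (j:ℤ)
        - (w ((j:ℤ) + 1) - w (j:ℤ)) * w ((j:ℤ) + 1)) := by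
        rw [Finset.sum_sub_distrib]
        congr 1
        exact Finset.sum_congr rfl fun j _ => hG1 j
    _ = -∑ j ∈ Finset.range N, (w ((j:ℤ) + 1) - w (j:ℤ))^2 := by
        rw [← Finset.sum_neg_distrib]
        exact Finset.sum_congr rfl fun j _ => by ring

/-- Second central difference in the first index, with mesh size `h₁`. -/
noncomputable def dxx (h₁ : ℝ) (W : ℤ × ℤ → ℝ) : ℤ × ℤ → ℝ :=
  fun j => (W (j.1 + 1, j.2) - 2 * W (j.1, j.2) + W (j.1 - 1, j.2)) / h₁ ^ 2

/-- Second central difference in the second index, with mesh size `h₂`. -/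
noncomputable def dyy (h₂ : ℝ) (W : ℤ × ℤ → ℝ) : ℤ × ℤ → ℝ :=
  fun j => (W (j.1, j.2 + 1) - 2 * W (j.1, j.2) + W (j.1, j.2 - 1)) / h₂ ^ 2

/-- An `(N₁,N₂)`-periodic grid function. -/
def GridPeriodic (N₁ N₂ : ℕ) (W : ℤ × ℤ → ℝ) : Prop :=
  ∀ j₁ j₂ : ℤ, W (j₁ + N₁, j₂) = W (j₁, j₂) ∧ W (j₁, j₂ + N₂) = W (j₁, j₂)

/-- Discrete inner product of grid functions over one period. -/
noncomputable def dInner (N₁ N₂ : ℕ) (h₁ h₂ : ℝ) (U V : ℤ × ℤ → ℝ) : ℝ :=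
  h₁ * h₂ * ∑ j₁ ∈ Finset.range N₁, ∑ j₂ ∈ Finset.range N₂,
    U ((j₁ : ℤ), (j₂ : ℤ)) * V ((j₁ : ℤ), (j₂ : ℤ))

/-- Discrete `L²` norm of a grid function over one period. -/
noncomputable def dNorm (N₁ N₂ : ℕ) (h₁ h₂ : ℝ) (U : ℤ × ℤ → ℝ) : ℝ :=
  Real.sqrt (dInner N₁ N₂ h₁ h₂ U U)

theorem scheme_matrix_positive_definite
    (τ h₁ h₂ : ℝ) (hτ : 0 < τ) (hh₁ : 0 < h₁) (hh₂ : 0 < h₂)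
    (N₁ N₂ : ℕ) (hN₁ : 0 < N₁) (hN₂ : 0 < N₂)
    (d : ℤ × ℤ → ℝ) (hd : GridPeriodic N₁ N₂ d)
    (A : (ℤ × ℤ → ℝ) → (ℤ × ℤ → ℝ))
    (hA : ∀ (U : ℤ × ℤ → ℝ) (j : ℤ × ℤ),
      A U j = U j - (τ^2 / 4) * (dxx h₁ U j + dyy h₂ U j)
        + (τ^2 / 8) * (d j)^2 * U j) :
    ∀ U : ℤ × ℤ → ℝ, GridPeriodic N₁ N₂ U →
      (dInner N₁ N₂ h₁ h₂ (A U) U ≥ (dNorm N₁ N₂ h₁ h₂ U)^2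
        ∧ (A U = 0 → U = 0)) := by
  intro U hU
  set S : ℝ := ∑ j₁ ∈ range N₁, ∑ j₂ ∈ range N₂, U ((j₁:ℤ), (j₂:ℤ))^2 with hS
  set X : ℝ := ∑ j₁ ∈ range N₁, ∑ j₂ ∈ range N₂,
    dxx h₁ U ((j₁:ℤ), (j₂:ℤ)) * U ((j₁:ℤ), (j₂:ℤ)) with hXdef
  set Y : ℝ := ∑ j₁ ∈ range N₁, ∑ j₂ ∈ range N₂,
    dyy h₂ U ((j₁:ℤ), (j₂:ℤ)) * U ((j₁:ℤ), (j₂:ℤ)) with hYdef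
  set D : ℝ := ∑ j₁ ∈ range N₁, ∑ j₂ ∈ range N₂,
    (d ((j₁:ℤ), (j₂:ℤ)))^2 * U ((j₁:ℤ), (j₂:ℤ))^2 with hDdef
  -- S, D are nonneg
  have hSnn : 0 ≤ S := by positivity
  have hDnn : 0 ≤ D := by positivity
  -- X ≤ 0
  have hXle : X ≤ 0 := by
    rw [hXdef, Finset.sum_comm]
    apply Finset.sum_nonpos
    intro j₂ _
    have hw : ∀ j : ℤ, (fun t => U (t, (j₂:ℤ))) (j + N₁) = (fun t => U (t, (j₂:ℤ))) j :=
      fun j => (hU j j₂).1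
    have hrow := row_identity N₁ (fun t => U (t, (j₂:ℤ))) hw
    have heq : ∑ j₁ ∈ range N₁, dxx h₁ U ((j₁:ℤ), (j₂:ℤ)) * U ((j₁:ℤ), (j₂:ℤ))
        = (∑ j₁ ∈ range N₁, (U ((j₁:ℤ)+1, (j₂:ℤ)) - 2 * U ((j₁:ℤ), (j₂:ℤ))
            + U ((j₁:ℤ)-1, (j₂:ℤ))) * U ((j₁:ℤ), (j₂:ℤ))) / h₁^2 := by
      rw [Finset.sum_div]
      exact Finset.sum_congr rfl fun j _ => by rw [dxx]; ring
    rw [heq, hrow]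
    apply div_nonpos_of_nonpos_of_nonneg
    · simp only [neg_nonpos]
      positivity
    · positivity
  -- Y ≤ 0
  have hYle : Y ≤ 0 := by
    rw [hYdef]
    apply Finset.sum_nonpos
    intro j₁ _
    have hw : ∀ j : ℤ, (fun t => U ((j₁:ℤ), t)) (j + N₂) = (fun t => U ((j₁:ℤ), t)) j :=
      fun j => (hU j₁ j).2
    have hrow := row_identity N₂ (fun t => U ((j₁:ℤ), t)) hw
    have heq : ∑ j₂ ∈ range N₂, dyy h₂ U ((j₁:ℤ), (j₂:ℤ)) * U ((j₁:ℤ), (j₂:ℤ))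
        = (∑ j₂ ∈ range N₂, (U ((j₁:ℤ), (j₂:ℤ)+1) - 2 * U ((j₁:ℤ), (j₂:ℤ))
            + U ((j₁:ℤ), (j₂:ℤ)-1)) * U ((j₁:ℤ), (j₂:ℤ))) / h₂^2 := by
      rw [Finset.sum_div]
      exact Finset.sum_congr rfl fun j _ => by rw [dyy]; ring
    rw [heq, hrow]
    apply div_nonpos_of_nonpos_of_nonneg
    · simp only [neg_nonpos]
      positivity
    · positivity
  -- expand the double sum
  have hexpand : ∑ j₁ ∈ range N₁, ∑ j₂ ∈ range N₂,
      A U ((j₁:ℤ), (j₂:ℤ)) * U ((j₁:ℤ), (j₂:ℤ))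
      = S - (τ^2/4) * (X + Y) + (τ^2/8) * D := by
    have hterm : ∀ (j : ℤ × ℤ), A U j * U j
        = U j^2 - (τ^2/4) * (dxx h₁ U j * U j + dyy h₂ U j * U j)
          + (τ^2/8) * ((d j)^2 * U j^2) := fun j => by rw [hA]; ring
    simp only [hterm]
    rw [hS, hXdef, hYdef, hDdef]
    simp only [Finset.sum_add_distrib, Finset.sum_sub_distrib, ← Finset.mul_sum]
  have hInnerU : dInner N₁ N₂ h₁ h₂ U U = h₁ * h₂ * S := by
    rw [dInner, hS]
    congr 1
    exact Finset.sum_congr rfl fun j₁ _ => Finset.sum_congr rfl fun j₂ _ => (sq _).symm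
  have hInnerUnn : 0 ≤ dInner N₁ N₂ h₁ h₂ U U := by
    rw [hInnerU]; positivity
  have hnormsq : (dNorm N₁ N₂ h₁ h₂ U)^2 = h₁ * h₂ * S := by
    rw [dNorm, Real.sq_sqrt hInnerUnn, hInnerU]
  have hmain : dInner N₁ N₂ h₁ h₂ (A U) U ≥ (dNorm N₁ N₂ h₁ h₂ U)^2 := by
    rw [dInner, hexpand, hnormsq]
    have h1 : 0 < h₁ * h₂ := mul_pos hh₁ hh₂
    have hτ2 : 0 < τ^2 := by positivity
    nlinarith [mul_nonneg (le_of_lt h1) hDnn, mul_nonneg (le_of_lt h1) (neg_nonneg.mpr hXle),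
      mul_nonneg (le_of_lt h1) (neg_nonneg.mpr hYle)]
  refine ⟨hmain, ?_⟩
  intro hAU0
  -- dInner (A U) U = 0
  have hz : dInner N₁ N₂ h₁ h₂ (A U) U = 0 := by
    rw [dInner]
    simp [hAU0]
  have hS0 : S = 0 := by
    have h1 : 0 < h₁ * h₂ := mul_pos hh₁ hh₂
    have : h₁ * h₂ * S ≤ 0 := by rw [← hnormsq]; rw [hz] at hmain; linarith
    nlinarith
  -- each value on the fundamental domain is zero
  have hpt : ∀ j₁ ∈ range N₁, ∀ j₂ ∈ range N₂, U ((j₁:ℤ), (j₂:ℤ)) = 0 := by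
    intro j₁ hj₁ j₂ hj₂
    have hrow0 : ∑ j₂ ∈ range N₂, U ((j₁:ℤ), (j₂:ℤ))^2 = 0 := by
      exact (Finset.sum_eq_zero_iff_of_nonneg
        (f := fun j₁ : ℕ => ∑ j₂ ∈ range N₂, U ((j₁:ℤ), (j₂:ℤ))^2)
        (fun j₁ _ => Finset.sum_nonneg fun j₂ _ => sq_nonneg _)).mp hS0 j₁ hj₁
    have h2 := (Finset.sum_eq_zero_iff_of_nonneg
      (f := fun j₂ : ℕ => U ((j₁:ℤ), (j₂:ℤ))^2)
      (fun j₂ _ => sq_nonneg _)).mp hrow0 j₂ hj₂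
    exact pow_eq_zero_iff (two_ne_zero) |>.mp h2
  -- extend by periodicity
  funext p
  obtain ⟨a, b⟩ := p
  have px : Function.Periodic (fun t => U (t, b)) (N₁:ℤ) := fun t => (hU t b).1
  have hstep1 : U (a, b) = U (a % (N₁:ℤ), b) := by
    have hmul := (px.int_mul (a / (N₁:ℤ))) (a % (N₁:ℤ))
    have heq : a % (N₁:ℤ) + a / (N₁:ℤ) * (N₁:ℤ) = a := by
      rw [mul_comm]; exact Int.emod_add_mul_ediv a (N₁:ℤ)
    have h2 : U (a, b) = U (a % (N₁:ℤ), b) := by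
      conv_lhs => rw [← heq]
      simpa using hmul
    exact h2
  set a' : ℤ := a % (N₁:ℤ) with ha'
  have py : Function.Periodic (fun t => U (a', t)) (N₂:ℤ) := fun t => (hU a' t).2
  have hstep2 : U (a', b) = U (a', b % (N₂:ℤ)) := by
    have hmul := (py.int_mul (b / (N₂:ℤ))) (b % (N₂:ℤ))
    have heq : b % (N₂:ℤ) + b / (N₂:ℤ) * (N₂:ℤ) = b := by
      rw [mul_comm]; exact Int.emod_add_mul_ediv b (N₂:ℤ)
    have h2 : U (a', b) = U (a', b % (N₂:ℤ)) := by
      conv_lhs => rw [← heq]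
      simpa using hmul
    exact h2
  set b' : ℤ := b % (N₂:ℤ) with hb'
  have hN₁' : (0:ℤ) < (N₁:ℤ) := by exact_mod_cast hN₁
  have hN₂' : (0:ℤ) < (N₂:ℤ) := by exact_mod_cast hN₂
  have ha'nn : 0 ≤ a' := Int.emod_nonneg a (ne_of_gt hN₁')
  have hb'nn : 0 ≤ b' := Int.emod_nonneg b (ne_of_gt hN₂')
  have ha'lt : a' < (N₁:ℤ) := Int.emod_lt_of_pos a hN₁'
  have hb'lt : b' < (N₂:ℤ) := Int.emod_lt_of_pos b hN₂'
  have hcast : U (a', b') = U ((a'.toNat : ℤ), (b'.toNat : ℤ)) := by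
    rw [Int.toNat_of_nonneg ha'nn, Int.toNat_of_nonneg hb'nn]
  have hmem1 : a'.toNat ∈ range N₁ := by
    rw [Finset.mem_range]; omega
  have hmem2 : b'.toNat ∈ range N₂ := by
    rw [Finset.mem_range]; omega
  have : U ((a'.toNat : ℤ), (b'.toNat : ℤ)) = 0 := hpt _ hmem1 _ hmem2
  show U (a, b) = 0
  rw [hstep1, hstep2, hcast, this]
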